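/- Let f : A → A′ and g : B → B′ be L-homomorphisms of join-semilattices with zero, and define h on bi-ideals by h(I) = ∇_{A′,B′} ∪ { ⟨u,v⟩ : ∃ ⟨x,y⟩ ∈ I, u ≤ f(x), v ≤ g(y) }. Then h is a lattice homomorphism from the lattice of bi-ideals of A × B to the lattice of bi-ideals of A′ × B′, i.e., h(I ∨ J) = h(I) ∨ h(J) and h(I ∩ J) = h(I) ∩ h(J). -/

import Mathlib

variable {A B : Type*} [SemilatticeSup A] [OrderBot A] [SemilatticeSup B] [OrderBot B]

/-- A bi-ideal of `A × B`: a downward closed subset containing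
`∇ = (A × {0}) ∪ ({0} × B)` that is closed under lateral joins. -/
def IsBiIdeal (I : Set (A × B)) : Prop :=
  (∀ ⦃p q : A × B⦄, q ≤ p → p ∈ I → q ∈ I) ∧
  (∀ a : A, (a, (⊥ : B)) ∈ I) ∧
  (∀ b : B, ((⊥ : A), b) ∈ I) ∧
  (∀ a₀ a₁ : A, ∀ b : B, (a₀, b) ∈ I → (a₁, b) ∈ I → (a₀ ⊔ a₁, b) ∈ I) ∧
  (∀ a : A, ∀ b₀ b₁ : B, (a, b₀) ∈ I → (a, b₁) ∈ I → (a, b₀ ⊔ b₁) ∈ I)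

/-- `∇ = (A × {0}) ∪ ({0} × B)`, the least bi-ideal. -/
def nabla (A B : Type*) [SemilatticeSup A] [OrderBot A] [SemilatticeSup B] [OrderBot B] :
    Set (A × B) := {p | p.1 = ⊥ ∨ p.2 = ⊥}

/-- The pure tensor `a ⊗ b`. -/
def pureTensor (a : A) (b : B) : Set (A × B) :=
  nabla A B ∪ {p | p.1 ≤ a ∧ p.2 ≤ b}

/-- The bi-ideal generated by a subset `X` of `A × B`. -/
def biGen (X : Set (A × B)) : Set (A × B) := ⋂₀ {K | IsBiIdeal K ∧ X ⊆ K}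

/-- The join of two bi-ideals in the lattice of bi-ideals. -/
def biSup (I J : Set (A × B)) : Set (A × B) := biGen (I ∪ J)

/-- Elements of the tensor product `A ⊗ B`: the compact (finitely generated) bi-ideals. -/
def IsTensorElt (I : Set (A × B)) : Prop := ∃ S : Finset (A × B), I = biGen ↑S

/-- An L-homomorphism of join-semilattices with zero. -/
def IsLHom {A B : Type*} [SemilatticeSup A] [OrderBot A] [SemilatticeSup B] [OrderBot B]
    (f : A → B) : Prop :=
  f ⊥ = ⊥ ∧ (∀ a₀ a₁ : A, f (a₀ ⊔ a₁) = f a₀ ⊔ f a₁) ∧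
  (∀ a₀ a₁ : A, ∀ b : B, b ≤ f a₀ → b ≤ f a₁ → ∃ x : A, x ≤ a₀ ∧ x ≤ a₁ ∧ b ≤ f x)

/-- The image map on bi-ideals induced by `f` and `g`:
`h(I) = ∇ ∪ { ⟨u,v⟩ : ∃ ⟨x,y⟩ ∈ I, u ≤ f x, v ≤ g y }`. -/
def hmap {A A' B B' : Type*} [SemilatticeSup A] [OrderBot A] [SemilatticeSup A']
    [OrderBot A'] [SemilatticeSup B] [OrderBot B] [SemilatticeSup B'] [OrderBot B']
    (f : A → A') (g : B → B') (I : Set (A × B)) : Set (A' × B') :=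
  nabla A' B' ∪ {p | ∃ q ∈ I, p.1 ≤ f q.1 ∧ p.2 ≤ g q.2}

/-! For a bi-ideal `T`, `h(K) ⊆ T ↔ K ⊆ (f × g)⁻¹(T)`, and since `f` and `g` preserve `0` and `∨`,
the pullback of a bi-ideal is a bi-ideal. The L-property of `g` makes `h(K)` closed under joins in
the first coordinate (that of `f` in the second), so `h(K)` is a bi-ideal as well; hence `h` is a
left adjoint between lattices of bi-ideals and preserves joins. For intersections, the L-property
replaces witnesses `⟨x₀,y₀⟩ ∈ I`, `⟨x₁,y₁⟩ ∈ J` of `⟨u,v⟩ ∈ h(I) ∩ h(J)` by a common lower one. -/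

lemma IsLHom.monotone {f : A → B} (hf : IsLHom f) : Monotone f := fun a b hab => by
  simpa [← hf.2.1, sup_eq_right.2 hab] using le_sup_left (a := f a) (b := f b)

section BiIdeal

variable {K : Set (A × B)}

lemma IsBiIdeal.nabla_subset (hK : IsBiIdeal K) : nabla A B ⊆ K := by
  rintro ⟨a, b⟩ (rfl | rfl)
  exacts [hK.2.2.1 b, hK.2.1 a]

lemma IsBiIdeal.preimage_swap (hK : IsBiIdeal K) : IsBiIdeal (Prod.swap ⁻¹' K) :=
  ⟨fun _ _ hqp hp => hK.1 (Prod.swap_le_swap.2 hqp) hp, hK.2.2.1, hK.2.1,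
    fun b₀ b₁ a => hK.2.2.2.2 a b₀ b₁, fun b a₀ a₁ => hK.2.2.2.1 a₀ a₁ b⟩

lemma isBiIdeal_biGen (X : Set (A × B)) : IsBiIdeal (biGen X) :=
  ⟨fun _ _ hqp hp K hK => hK.1.1 hqp (hp K hK),
    fun a _ hK => hK.1.2.1 a,
    fun b _ hK => hK.1.2.2.1 b,
    fun a₀ a₁ b h₀ h₁ K hK => hK.1.2.2.2.1 a₀ a₁ b (h₀ K hK) (h₁ K hK),
    fun a b₀ b₁ h₀ h₁ K hK => hK.1.2.2.2.2 a b₀ b₁ (h₀ K hK) (h₁ K hK)⟩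

lemma subset_biGen (X : Set (A × B)) : X ⊆ biGen X :=
  fun _ hp _ hK => hK.2 hp

lemma biGen_subset {X : Set (A × B)} (hK : IsBiIdeal K) (hXK : X ⊆ K) : biGen X ⊆ K :=
  Set.sInter_subset_of_mem ⟨hK, hXK⟩

end BiIdeal

section Hmap

variable {A' B' : Type*} [SemilatticeSup A'] [OrderBot A'] [SemilatticeSup B'] [OrderBot B']
  {f : A → A'} {g : B → B'} {I J K : Set (A × B)} {T : Set (A' × B')}

lemma hmap_mono : Monotone (hmap f g : Set (A × B) → Set (A' × B')) := by
  rintro I J hIJ p (hp | ⟨q, hq, hpq⟩)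
  exacts [Or.inl hp, Or.inr ⟨q, hIJ hq, hpq⟩]

lemma hmap_swap : hmap g f (Prod.swap ⁻¹' K) = Prod.swap ⁻¹' hmap f g K := by
  ext ⟨v, u⟩
  simp only [hmap, nabla, Set.mem_union, Set.mem_ofPred_eq, Set.mem_preimage, Prod.swap_prod_mk,
    Prod.exists]
  rw [or_comm (a := v = ⊥), exists_comm]
  simp only [and_comm (a := v ≤ _)]

lemma IsBiIdeal.preimage_prodMap (hf : IsLHom f) (hg : IsLHom g) (hT : IsBiIdeal T) :
    IsBiIdeal (Prod.map f g ⁻¹' T) :=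
  ⟨IsLowerSet.preimage hT.1 (hf.monotone.prodMap hg.monotone),
    fun a => by simpa [hg.1] using hT.2.1 (f a),
    fun b => by simpa [hf.1] using hT.2.2.1 (g b),
    fun a₀ a₁ b h₀ h₁ => by simpa [hf.2.1] using hT.2.2.2.1 _ _ _ h₀ h₁,
    fun a b₀ b₁ h₀ h₁ => by simpa [hg.2.1] using hT.2.2.2.2 _ _ _ h₀ h₁⟩

lemma hmap_subset_iff (hT : IsBiIdeal T) : hmap f g K ⊆ T ↔ K ⊆ Prod.map f g ⁻¹' T :=
  ⟨fun h q hq => h (Or.inr ⟨q, hq, le_rfl, le_rfl⟩),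
    fun h => Set.union_subset hT.nabla_subset fun _ ⟨_, hq, hpq⟩ => hT.1 hpq (h hq)⟩

lemma sup_fst_mem_hmap (hf : IsLHom f) (hg : IsLHom g) (hK : IsBiIdeal K) {a₀ a₁ : A'} {b : B'}
    (h₀ : (a₀, b) ∈ hmap f g K) (h₁ : (a₁, b) ∈ hmap f g K) : (a₀ ⊔ a₁, b) ∈ hmap f g K := by
  rcases h₀ with (rfl | rfl) | ⟨⟨x₀, y₀⟩, hq₀, ha₀, hb₀⟩
  · rwa [bot_sup_eq]
  · exact Or.inl (Or.inr rfl)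
  rcases h₁ with (rfl | rfl) | ⟨⟨x₁, y₁⟩, hq₁, ha₁, hb₁⟩
  · rw [sup_bot_eq]
    exact Or.inr ⟨_, hq₀, ha₀, hb₀⟩
  · exact Or.inl (Or.inr rfl)
  obtain ⟨y, hy₀, hy₁, hby⟩ := hg.2.2 y₀ y₁ b hb₀ hb₁
  have hxy : (x₀ ⊔ x₁, y) ∈ K :=
    hK.2.2.2.1 x₀ x₁ y (hK.1 (Prod.mk_le_mk.2 ⟨le_rfl, hy₀⟩) hq₀)
      (hK.1 (Prod.mk_le_mk.2 ⟨le_rfl, hy₁⟩) hq₁)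
  exact Or.inr ⟨_, hxy, hf.2.1 x₀ x₁ ▸ sup_le_sup ha₀ ha₁, hby⟩

lemma IsBiIdeal.hmap (hf : IsLHom f) (hg : IsLHom g) (hK : IsBiIdeal K) :
    IsBiIdeal (hmap f g K) := by
  refine ⟨?_, fun a => Or.inl (Or.inr rfl), fun b => Or.inl (Or.inl rfl),
    fun a₀ a₁ b => sup_fst_mem_hmap hf hg hK, fun a b₀ b₁ h₀ h₁ => ?_⟩
  · rintro p q hqp ((hp | hp) | ⟨r, hr, hpr⟩)
    · exact Or.inl (Or.inl (le_bot_iff.1 (hp ▸ hqp.1)))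
    · exact Or.inl (Or.inr (le_bot_iff.1 (hp ▸ hqp.2)))
    · exact Or.inr ⟨r, hr, hqp.1.trans hpr.1, hqp.2.trans hpr.2⟩
  · have h := sup_fst_mem_hmap hg hf hK.preimage_swap (b := a)
      (by rw [hmap_swap]; exact h₀) (by rw [hmap_swap]; exact h₁)
    rw [hmap_swap] at h
    exact h

lemma hmap_biSup (hf : IsLHom f) (hg : IsLHom g) (I J : Set (A × B)) :
    hmap f g (biSup I J) = biSup (hmap f g I) (hmap f g J) := by
  have hT := isBiIdeal_biGen (hmap f g I ∪ hmap f g J)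
  have hIJT := subset_biGen (hmap f g I ∪ hmap f g J)
  refine Set.Subset.antisymm ?_ ?_
  · refine (hmap_subset_iff hT).2 <|
      biGen_subset (hT.preimage_prodMap hf hg) (Set.union_subset ?_ ?_)
    · exact (hmap_subset_iff hT).1 (Set.subset_union_left.trans hIJT)
    · exact (hmap_subset_iff hT).1 (Set.subset_union_right.trans hIJT)
  · refine biGen_subset ((isBiIdeal_biGen _).hmap hf hg) (Set.union_subset ?_ ?_)
    · exact hmap_mono (Set.subset_union_left.trans (subset_biGen _))
    · exact hmap_mono (Set.subset_union_right.trans (subset_biGen _))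

lemma hmap_inter (hf : IsLHom f) (hg : IsLHom g) (hI : IsLowerSet I) (hJ : IsLowerSet J) :
    hmap f g (I ∩ J) = hmap f g I ∩ hmap f g J := by
  refine Set.Subset.antisymm
    (Set.subset_inter (hmap_mono Set.inter_subset_left) (hmap_mono Set.inter_subset_right)) ?_
  rintro p ⟨hpI | ⟨⟨x₀, y₀⟩, hq₀, hp₀⟩, hpJ | ⟨⟨x₁, y₁⟩, hq₁, hp₁⟩⟩
  · exact Or.inl hpI
  · exact Or.inl hpI
  · exact Or.inl hpJ
  obtain ⟨x, hx₀, hx₁, hpx⟩ := hf.2.2 x₀ x₁ p.1 hp₀.1 hp₁.1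
  obtain ⟨y, hy₀, hy₁, hpy⟩ := hg.2.2 y₀ y₁ p.2 hp₀.2 hp₁.2
  have hxy : (x, y) ∈ I ∩ J :=
    ⟨hI (Prod.mk_le_mk.2 ⟨hx₀, hy₀⟩) hq₀, hJ (Prod.mk_le_mk.2 ⟨hx₁, hy₁⟩) hq₁⟩
  exact Or.inr ⟨(x, y), hxy, hpx, hpy⟩

end Hmap

/-- The map `h` induced on bi-ideals by L-homomorphisms is a lattice homomorphism:
it preserves joins of bi-ideals and intersections of bi-ideals. -/
theorem hmap_latticeHom {A A' B B' : Type*} [SemilatticeSup A] [OrderBot A]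
    [SemilatticeSup A'] [OrderBot A'] [SemilatticeSup B] [OrderBot B]
    [SemilatticeSup B'] [OrderBot B'] (f : A → A') (g : B → B')
    (hf : IsLHom f) (hg : IsLHom g) (I J : Set (A × B))
    (hI : IsBiIdeal I) (hJ : IsBiIdeal J) :
    hmap f g (biSup I J) = biSup (hmap f g I) (hmap f g J) ∧
    hmap f g (I ∩ J) = hmap f g I ∩ hmap f g J := by
  exact ⟨hmap_biSup hf hg I J, hmap_inter hf hg hI.1 hJ.1⟩
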